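/- Let ℏ₀ > 0, s, s' > 0 and let c = (c_k), c' = (c'_k) be square-summable sequences of complex numbers indexed by ℤ. Then the function (x,y) ↦ conj(Φ_s[c](x,y)) · Φ_{s'}[c'](x,y) · e^{−(s+s')y²/(2ℏ₀)} is integrable on (ℝ/2πℤ) × ℝ with respect to (dx/2π)·dy, and √((s+s')/2) · ∫_ℝ ∫_0^{2π} conj(Φ_s[c](x,y)) · Φ_{s'}[c'](x,y) · e^{−(s+s')y²/(2ℏ₀)} (dx/2π) dy = √(πℏ₀) · Σ_{k∈ℤ} conj(c_k)·c'_k. (This is Theorem 3.5, ⟨σ_s, σ'_{s'}⟩^{BKS} = a_{(s+s')/2}·⟨f, f'⟩_{L²(K)}, in the abelian case K = U(1), where a_t = (πℏ₀)^{1/2} since ρ = 0.) -/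

import Mathlib

/-!
Both series are expanded, so the integrand becomes the double series over `(j, k) ∈ ℤ × ℤ` of
`conj c_j · c'_k · e^{i(k-j)x} · G_{j,k}(y)`. Completing the square, `G_{j,k}` is the Gaussian
`e^{-(s+s') (y - y_{j,k})² / (2ℏ₀)}` times the factor `e^{-ℏ₀ s s' (j-k)² / (2(s+s'))}`, so the
integral of the absolute value of the `(j, k)` term is `|c_j| |c'_k|` times a summable function of
`j - k`; an `ℓ² × ℓ² × ℓ¹` bound makes these integrals summable, which gives integrability and
lets us integrate termwise. The `x`-integral kills every term with `j ≠ k`, and on the diagonal the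
Gaussian integral `√(2πℏ₀/(s+s'))` remains.
-/

open scoped Real BigOperators
open MeasureTheory

/-- The `J_s`-holomorphic function `(C_{sℏ₀}f) ∘ ψ_s` on `T*U(1) ≅ (ℝ/2πℤ) × ℝ`,
where `f ∈ L²(S¹)` has Fourier coefficients `c_k`:
`Φ_s[c](x,y) = Σ_{k∈ℤ} c_k e^{−sℏ₀k²/2} e^{ikx} e^{−ksy}`. -/
noncomputable def Phi (ℏ₀ s : ℝ) (c : ℤ → ℂ) (x y : ℝ) : ℂ :=
  ∑' k : ℤ, c k * Complex.exp (-((s : ℂ) * (ℏ₀ : ℂ) * (k : ℂ) ^ 2) / 2) *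
    Complex.exp ((k : ℂ) * Complex.I * (x : ℂ)) * Complex.exp (-((k : ℂ) * (s : ℂ) * (y : ℂ)))

lemma summable_exp_neg_mul_sq_add_mul {A : ℝ} (hA : 0 < A) (B : ℝ) :
    Summable fun n : ℤ => Real.exp (-A * n ^ 2 + B * n) := by
  have h := ((summable_jacobiTheta₂_term_iff ((-B / (2 * π) : ℝ) * Complex.I)
    ((A / π : ℝ) * Complex.I)).2 (by simpa using div_pos hA Real.pi_pos)).norm
  refine h.congr fun n => ?_
  rw [norm_jacobiTheta₂_term]
  simp only [Complex.mul_im, Complex.I_im, Complex.I_re, Complex.ofReal_re, Complex.ofReal_im]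
  field_simp
  ring_nf

lemma summable_mul_of_summable_sq {ι : Type*} {f g : ι → ℝ} (hf : Summable fun i => f i ^ 2)
    (hg : Summable fun i => g i ^ 2) : Summable fun i => f i * g i :=
  ((hf.add hg).div_const 2).of_norm_bounded fun i => by
    rw [Real.norm_eq_abs, abs_mul]
    nlinarith [sq_nonneg (|f i| - |g i|), sq_abs (f i), sq_abs (g i)]

lemma summable_mul_mul_comp_sub_of_sq {G : Type*} [AddCommGroup G] {u v g : G → ℝ}
    (hu : Summable fun j => u j ^ 2) (hv : Summable fun k => v k ^ 2) (hg : Summable g)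
    (hg0 : ∀ m, 0 ≤ g m) :
    Summable fun q : G × G => u q.1 * v q.2 * g (q.1 - q.2) := by
  have hu' : Summable fun q : G × G => u q.1 ^ 2 * g (q.1 - q.2) := by
    rw [← (Equiv.prodShear (Equiv.refl G) Equiv.subLeft).summable_iff]
    simpa [Function.comp_def] using hu.mul_of_nonneg hg (fun _ => sq_nonneg _) hg0
  have hv' : Summable fun q : G × G => v q.2 ^ 2 * g (q.1 - q.2) := by
    rw [← ((Equiv.prodShear (Equiv.refl G) Equiv.addRight).trans
      (Equiv.prodComm G G)).summable_iff]
    simpa [Function.comp_def] using hv.mul_of_nonneg hg (fun _ => sq_nonneg _) hg0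
  refine ((hu'.add hv').div_const 2).of_norm_bounded fun q => ?_
  have := mul_nonneg (sq_nonneg (|u q.1| - |v q.2|)) (hg0 (q.1 - q.2))
  rw [Real.norm_eq_abs, abs_mul, abs_mul, abs_of_nonneg (hg0 _), ← sq_abs (u q.1),
    ← sq_abs (v q.2)]
  nlinarith

lemma tsum_ite_fst_eq_snd {ι M : Type*} [DecidableEq ι] [AddCommMonoid M] [TopologicalSpace M]
    (f : ι × ι → M) : ∑' q : ι × ι, (if q.1 = q.2 then f q else 0) = ∑' i, f (i, i) := by
  have hdiag : Function.support (fun q : ι × ι => if q.1 = q.2 then f q else 0) ⊆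
      Set.range fun i => (i, i) := fun q hq =>
    ⟨q.1, Prod.ext rfl (not_imp_comm.1 (fun h => if_neg h) hq)⟩
  simpa using (Function.Injective.tsum_eq (fun i j h => congrArg Prod.fst h) hdiag).symm

-- The series converges in `L¹`, and `Lp.coeFn_tsum` identifies its `L¹` sum with the pointwise sum.
theorem integrable_tsum_of_summable_integral_norm {α E ι : Type*} [MeasurableSpace α]
    {μ : Measure α} [NormedAddCommGroup E] [CompleteSpace E] [Countable ι] {F : ι → α → E}
    (hF_int : ∀ i, Integrable (F i) μ) (hF_sum : Summable fun i ↦ ∫ a, ‖F i a‖ ∂μ) :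
    Integrable (fun a ↦ ∑' i, F i a) μ := by
  set f : ι → α →₁[μ] E := fun i ↦ (hF_int i).toL1 _
  have hf : ∑' i, ‖f i‖ₑ ≠ ⊤ := by
    simp only [f, Integrable.enorm_toL1, ← ofReal_integral_norm_eq_lintegral_enorm (hF_int _)]
    rw [← ENNReal.ofReal_tsum_of_nonneg (fun i => integral_nonneg fun _ => norm_nonneg _) hF_sum]
    exact ENNReal.ofReal_ne_top
  have hae : ∀ᵐ a ∂μ, ∀ i, f i a = F i a := ae_all_iff.2 fun i ↦ (hF_int i).coeFn_toL1
  refine (L1.integrable_coeFn (∑' i, f i)).congr ?_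
  filter_upwards [Lp.coeFn_tsum hf, hae] with a h1 h2
  rw [h1]
  exact tsum_congr h2

lemma integral_exp_neg_mul_sq_add (b m : ℝ) :
    ∫ y : ℝ, Real.exp (-b * (y + m) ^ 2) = √(π / b) := by
  rw [integral_add_right_eq_self (fun y : ℝ => Real.exp (-b * y ^ 2)) m, integral_gaussian]

lemma integrable_exp_neg_mul_sq_add {b : ℝ} (hb : 0 < b) (m : ℝ) :
    Integrable fun y : ℝ => Real.exp (-b * (y + m) ^ 2) :=
  (integrable_exp_neg_mul_sq hb).comp_add_right m

lemma setIntegral_exp_int_mul_I (m : ℤ) :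
    ∫ x in Set.Ioc 0 (2 * π), Complex.exp (m * Complex.I * x) =
      if m = 0 then (2 * π : ℂ) else 0 := by
  rw [← intervalIntegral.integral_of_le (by positivity)]
  split_ifs with hm
  · simp [hm]
  · have hmI : (m : ℂ) * Complex.I ≠ 0 := mul_ne_zero (Int.cast_ne_zero.2 hm) Complex.I_ne_zero
    rw [integral_exp_mul_complex hmI,
      show (m : ℂ) * Complex.I * (2 * π : ℝ) = m * (2 * π * Complex.I) by push_cast; ring,
      Complex.exp_int_mul_two_pi_mul_I]
    simp

lemma sqrt_div_two_mul_sqrt_pi_div {ℏ₀ t : ℝ} (hℏ : 0 < ℏ₀) (ht : 0 < t) :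
    √(t / 2) * √(π / (t / (2 * ℏ₀))) = √(π * ℏ₀) := by
  rw [← Real.sqrt_mul (by positivity)]
  congr 1
  field_simp

noncomputable def phiTerm (ℏ₀ s : ℝ) (c : ℤ → ℂ) (k : ℤ) (x y : ℝ) : ℂ :=
  c k * Complex.exp (-((s : ℂ) * (ℏ₀ : ℂ) * (k : ℂ) ^ 2) / 2) *
    Complex.exp ((k : ℂ) * Complex.I * (x : ℂ)) * Complex.exp (-((k : ℂ) * (s : ℂ) * (y : ℂ)))

lemma Phi_eq_tsum_phiTerm (ℏ₀ s : ℝ) (c : ℤ → ℂ) (x y : ℝ) :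
    Phi ℏ₀ s c x y = ∑' k, phiTerm ℏ₀ s c k x y :=
  rfl

lemma norm_phiTerm (ℏ₀ s : ℝ) (c : ℤ → ℂ) (k : ℤ) (x y : ℝ) :
    ‖phiTerm ℏ₀ s c k x y‖ = ‖c k‖ * Real.exp ((-(s * ℏ₀) * k ^ 2 + -(2 * s * y) * k) / 2) := by
  rw [phiTerm,
    show -((s : ℂ) * ℏ₀ * k ^ 2) / 2 = ((-(s * ℏ₀ * k ^ 2) / 2 : ℝ) : ℂ) by push_cast; ring,
    show (k : ℂ) * Complex.I * x = ((k * x : ℝ) : ℂ) * Complex.I by push_cast; ring,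
    show -((k : ℂ) * s * y) = ((-(k * s * y) : ℝ) : ℂ) by push_cast; ring]
  simp only [norm_mul, Complex.norm_exp_ofReal, Complex.norm_exp_ofReal_mul_I, mul_one]
  rw [mul_assoc, ← Real.exp_add]
  ring_nf

lemma summable_norm_phiTerm {ℏ₀ s : ℝ} (hℏ : 0 < ℏ₀) (hs : 0 < s) {c : ℤ → ℂ}
    (hc : Summable fun k : ℤ => ‖c k‖ ^ 2) (x y : ℝ) :
    Summable fun k => ‖phiTerm ℏ₀ s c k x y‖ := by
  simp only [norm_phiTerm]
  refine summable_mul_of_summable_sq hc ?_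
  simp only [← Real.exp_nat_mul]
  convert summable_exp_neg_mul_sq_add_mul (mul_pos hs hℏ) (-(2 * s * y)) using 3
  push_cast
  ring

noncomputable def crossTerm (ℏ₀ s s' : ℝ) (c c' : ℤ → ℂ) (q : ℤ × ℤ) (p : ℝ × ℝ) : ℂ :=
  starRingEnd ℂ (phiTerm ℏ₀ s c q.1 p.1 p.2) * phiTerm ℏ₀ s' c' q.2 p.1 p.2 *
    (Real.exp (-((s + s') * p.2 ^ 2) / (2 * ℏ₀)) : ℂ)

noncomputable def crossWeight (ℏ₀ s s' : ℝ) (m : ℤ) : ℝ :=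
  Real.exp (-(ℏ₀ * s * s' / (2 * (s + s'))) * (m : ℝ) ^ 2)

noncomputable def crossGaussian (ℏ₀ s s' : ℝ) (q : ℤ × ℤ) (y : ℝ) : ℝ :=
  Real.exp (-((s + s') / (2 * ℏ₀)) * (y + ℏ₀ * (q.1 * s + q.2 * s') / (s + s')) ^ 2)

lemma integrable_crossGaussian {ℏ₀ s s' : ℝ} (hℏ : 0 < ℏ₀) (hss' : 0 < s + s') (q : ℤ × ℤ) :
    Integrable (crossGaussian ℏ₀ s s' q) :=
  integrable_exp_neg_mul_sq_add (by positivity) _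

lemma integral_crossGaussian (ℏ₀ s s' : ℝ) (q : ℤ × ℤ) :
    ∫ y, crossGaussian ℏ₀ s s' q y = √(π / ((s + s') / (2 * ℏ₀))) :=
  integral_exp_neg_mul_sq_add _ _

lemma summable_crossWeight {ℏ₀ s s' : ℝ} (hℏ : 0 < ℏ₀) (hs : 0 < s) (hs' : 0 < s') :
    Summable (crossWeight ℏ₀ s s') := by
  refine (summable_exp_neg_mul_sq_add_mul (A := ℏ₀ * s * s' / (2 * (s + s'))) (by positivity)
    0).congr fun m => ?_
  rw [crossWeight, zero_mul, add_zero, neg_mul]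

lemma conj_mul_mul_eq_tsum_crossTerm {ℏ₀ s s' : ℝ} (hℏ : 0 < ℏ₀) (hs : 0 < s) (hs' : 0 < s')
    {c c' : ℤ → ℂ} (hc : Summable fun k : ℤ => ‖c k‖ ^ 2)
    (hc' : Summable fun k : ℤ => ‖c' k‖ ^ 2) (p : ℝ × ℝ) :
    starRingEnd ℂ (Phi ℏ₀ s c p.1 p.2) * Phi ℏ₀ s' c' p.1 p.2 *
        (Real.exp (-((s + s') * p.2 ^ 2) / (2 * ℏ₀)) : ℂ) =
      ∑' q, crossTerm ℏ₀ s s' c c' q p := by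
  have h := summable_norm_phiTerm hℏ hs hc p.1 p.2
  have h' := summable_norm_phiTerm hℏ hs' hc' p.1 p.2
  rw [Phi_eq_tsum_phiTerm, Phi_eq_tsum_phiTerm, Complex.conj_tsum,
    tsum_mul_tsum_of_summable_norm (by simpa using h) h', ← tsum_mul_right]
  rfl

-- Completing the square in `y`.
lemma crossTerm_eq {ℏ₀ s s' : ℝ} (hℏ : ℏ₀ ≠ 0) (hss' : s + s' ≠ 0) (c c' : ℤ → ℂ)
    (q : ℤ × ℤ) (p : ℝ × ℝ) :
    crossTerm ℏ₀ s s' c c' q p =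
      starRingEnd ℂ (c q.1) * c' q.2 * (crossWeight ℏ₀ s s' (q.1 - q.2) : ℂ) *
        Complex.exp ((q.2 - q.1 : ℤ) * Complex.I * p.1) * (crossGaussian ℏ₀ s s' q p.2 : ℂ) := by
  simp only [crossTerm, phiTerm, crossWeight, crossGaussian, map_mul, ← Complex.exp_conj,
    Complex.ofReal_exp, map_neg, map_div₀, map_pow, Complex.conj_ofReal, map_intCast,
    Complex.conj_I, map_ofNat]
  simp only [mul_assoc, mul_left_comm _ (c' q.2), ← Complex.exp_add]
  congr 3
  have hℏ' : (ℏ₀ : ℂ) ≠ 0 := by exact_mod_cast hℏ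
  have hss'' : (s : ℂ) + s' ≠ 0 := by exact_mod_cast hss'
  push_cast
  field_simp
  ring

lemma norm_crossTerm {ℏ₀ s s' : ℝ} (hℏ : ℏ₀ ≠ 0) (hss' : s + s' ≠ 0) (c c' : ℤ → ℂ)
    (q : ℤ × ℤ) (p : ℝ × ℝ) :
    ‖crossTerm ℏ₀ s s' c c' q p‖ =
      ‖c q.1‖ * ‖c' q.2‖ * crossWeight ℏ₀ s s' (q.1 - q.2) * crossGaussian ℏ₀ s s' q p.2 := by
  rw [crossTerm_eq hℏ hss', show ((q.2 - q.1 : ℤ) : ℂ) * Complex.I * p.1 =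
    ((q.2 - q.1 : ℤ) * p.1 : ℝ) * Complex.I by push_cast; ring]
  simp only [crossWeight, crossGaussian, norm_mul, RCLike.norm_conj, Complex.norm_real,
    Real.norm_eq_abs, Real.abs_exp, Complex.norm_exp_ofReal_mul_I, mul_one]

section crossTermIntegral

variable {ℏ₀ s s' : ℝ} (hℏ : 0 < ℏ₀) (hs : 0 < s) (hs' : 0 < s') (c c' : ℤ → ℂ)
include hℏ hs hs'

lemma integrable_crossTerm (q : ℤ × ℤ) :
    Integrable (crossTerm ℏ₀ s s' c c' q)
      ((volume.restrict (Set.Ioc 0 (2 * π))).prod volume) := by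
  rw [funext (crossTerm_eq hℏ.ne' (by positivity) c c' q)]
  refine Integrable.mul_prod (f := fun x : ℝ => _ * Complex.exp ((q.2 - q.1 : ℤ) * Complex.I * x))
    (g := fun y : ℝ => (crossGaussian ℏ₀ s s' q y : ℂ)) ?_ ?_
  · exact Continuous.integrableOn_Ioc (by fun_prop)
  · exact (integrable_crossGaussian hℏ (by positivity) q).ofReal

lemma integral_crossTerm (q : ℤ × ℤ) :
    ∫ p, crossTerm ℏ₀ s s' c c' q p ∂((volume.restrict (Set.Ioc 0 (2 * π))).prod volume) =
      if q.1 = q.2 then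
        (2 * π * √(π / ((s + s') / (2 * ℏ₀))) : ℂ) * (starRingEnd ℂ (c q.1) * c' q.2)
      else 0 := by
  rw [funext (crossTerm_eq hℏ.ne' (by positivity) c c' q),
    integral_prod_mul (fun x : ℝ => _ * Complex.exp ((q.2 - q.1 : ℤ) * Complex.I * x))
      (fun y : ℝ => (crossGaussian ℏ₀ s s' q y : ℂ)),
    integral_const_mul, setIntegral_exp_int_mul_I, integral_complex_ofReal, integral_crossGaussian]
  by_cases h : q.1 = q.2
  · simp [h, crossWeight]
    ring
  · simp [h, sub_eq_zero, Ne.symm h]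

lemma integral_norm_crossTerm (q : ℤ × ℤ) :
    ∫ p, ‖crossTerm ℏ₀ s s' c c' q p‖ ∂((volume.restrict (Set.Ioc 0 (2 * π))).prod volume) =
      2 * π * √(π / ((s + s') / (2 * ℏ₀))) *
        (‖c q.1‖ * ‖c' q.2‖ * crossWeight ℏ₀ s s' (q.1 - q.2)) := by
  rw [funext (norm_crossTerm hℏ.ne' (by positivity) c c' q),
    integral_prod_mul (fun _ : ℝ => _) (crossGaussian ℏ₀ s s' q), setIntegral_const,
    integral_crossGaussian, Real.volume_real_Ioc_of_le (by positivity),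
    smul_eq_mul]
  ring

lemma summable_integral_norm_crossTerm (hc : Summable fun k : ℤ => ‖c k‖ ^ 2)
    (hc' : Summable fun k : ℤ => ‖c' k‖ ^ 2) :
    Summable fun q => ∫ p, ‖crossTerm ℏ₀ s s' c c' q p‖
      ∂((volume.restrict (Set.Ioc 0 (2 * π))).prod volume) := by
  simp_rw [integral_norm_crossTerm hℏ hs hs']
  exact (summable_mul_mul_comp_sub_of_sq hc hc' (summable_crossWeight hℏ hs hs')
    fun _ => (Real.exp_pos _).le).mul_left _

end crossTermIntegral

/-- Theorem 3.5 in the abelian case `K = U(1)`: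
`⟨σ_s, σ'_{s'}⟩^{BKS} = a_{(s+s')/2} ⟨f, f'⟩_{L²(K)}`, with `a_t = (πℏ₀)^{1/2}` since `ρ = 0`. -/
theorem statement_3 {ℏ₀ s s' : ℝ} (hℏ : 0 < ℏ₀) (hs : 0 < s) (hs' : 0 < s')
    (c c' : ℤ → ℂ)
    (hc : Summable fun k : ℤ => ‖c k‖ ^ 2) (hc' : Summable fun k : ℤ => ‖c' k‖ ^ 2) :
    Integrable
      (fun p : ℝ × ℝ =>
        (starRingEnd ℂ) (Phi ℏ₀ s c p.1 p.2) * Phi ℏ₀ s' c' p.1 p.2 *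
          (Real.exp (-((s + s') * p.2 ^ 2) / (2 * ℏ₀)) : ℂ))
      ((volume.restrict (Set.Ioc 0 (2 * π))).prod volume) ∧
    (Real.sqrt ((s + s') / 2) : ℂ) *
        ∫ y : ℝ, (∫ x in Set.Ioc (0 : ℝ) (2 * π),
          (starRingEnd ℂ) (Phi ℏ₀ s c x y) * Phi ℏ₀ s' c' x y *
            (Real.exp (-((s + s') * y ^ 2) / (2 * ℏ₀)) : ℂ)) / (2 * (π : ℂ)) =
      (Real.sqrt (π * ℏ₀) : ℂ) * ∑' k : ℤ, (starRingEnd ℂ) (c k) * c' k := by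
  have hF_int := integrable_crossTerm hℏ hs hs' c c'
  have hF_sum := summable_integral_norm_crossTerm hℏ hs hs' c c' hc hc'
  have h_expand := funext (conj_mul_mul_eq_tsum_crossTerm hℏ hs hs' hc hc')
  have h_int : Integrable (fun p : ℝ × ℝ =>
      (starRingEnd ℂ) (Phi ℏ₀ s c p.1 p.2) * Phi ℏ₀ s' c' p.1 p.2 *
        (Real.exp (-((s + s') * p.2 ^ 2) / (2 * ℏ₀)) : ℂ))
      ((volume.restrict (Set.Ioc 0 (2 * π))).prod volume) := by
    rw [h_expand]
    exact integrable_tsum_of_summable_integral_norm hF_int hF_sum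
  refine ⟨h_int, ?_⟩
  rw [integral_div, ← integral_prod_symm _ h_int, h_expand,
    ← integral_tsum_of_summable_integral_norm hF_int hF_sum]
  simp_rw [integral_crossTerm hℏ hs hs']
  rw [tsum_ite_fst_eq_snd, tsum_mul_left, ← sqrt_div_two_mul_sqrt_pi_div hℏ (add_pos hs hs')]
  push_cast
  field_simp
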